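/- arXiv:1608.02906 — 7 statements merged into one kernel-verified Lean document; each statement's English description precedes it below -/
import Mathlib

section
/- Let a : Fin n → ℝ and define constants C : Fin n → Fin n → Fin n → ℂ by C μ ν σ = i * (a μ) if μ = ν and ν = σ, and C μ ν σ = 0 otherwise (corresponding to the differential algebra relations ⁅x μ, dx ν⁆ = i a μ δ^{μν} dx ν). Then C satisfies both consistency conditions: (i) C μ ν σ = C ν μ σ for all μ, ν, σ, and (ii) ∑ σ, (C μ ν σ * C λ σ κ − C λ ν σ * C μ σ κ) = 0 for all μ, ν, λ, κ. -/
theorem diagonal_C_satisfies_consistency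
    {n : ℕ} (a : Fin n → ℝ)
    (C : Fin n → Fin n → Fin n → ℂ)
    (hC : ∀ μ ν σ, C μ ν σ = if μ = ν ∧ ν = σ then Complex.I * (a μ) else 0) :
    (∀ μ ν σ, C μ ν σ = C ν μ σ) ∧
    (∀ μ ν lam κ, ∑ σ, (C μ ν σ * C lam σ κ - C lam ν σ * C μ σ κ) = 0) := by
  constructor
  · intro μ ν σ
    simp only [hC]
    by_cases h : μ = ν
    · subst h; rfl
    · simp [h, Ne.symm h]
  · intro μ ν lam κ
    apply Finset.sum_eq_zero
    intro σ _
    simp only [hC]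
    by_cases h1 : μ = ν <;> by_cases h2 : ν = σ <;> by_cases h3 : lam = σ <;>
      by_cases h4 : σ = κ <;> by_cases h5 : lam = ν <;> simp_all <;> ring
end

section
/- For d ≥ 1, a : Fin d → ℝ, and each μ : Fin d, define the operator X^μ on Schwartz functions f : ℝ^d → ℂ by (X^μ f)(q) = −i * (a μ) * ( q_μ * (∂f/∂q_μ)(q) + f(q)/2 ), where ∂f/∂q_μ denotes the partial derivative of f in the μ-th coordinate direction. Then each X^μ maps Schwartz functions to Schwartz functions, and the operators pairwise commute: X^μ (X^ν f) = X^ν (X^μ f) for all μ, ν : Fin d and every Schwartz function f. -/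
/-!
`X^μ = -i a_μ (q_μ ∂_μ + 1/2)` is built from operations preserving Schwartz space: a directional
derivative and multiplication by the coordinate `q_μ`, which has temperate growth. For `μ ≠ ν`
the coordinate `q_ν` is constant in the direction `e_μ`, so `X^μ X^ν f` expands into terms that
are symmetric in `μ, ν` once the second derivative of `f` is known to be symmetric (Schwarz).
-/

/-- The operator `X^μ` acting on functions on `ℝ^d`:
`(X^μ f)(q) = -i * a μ * (q μ * ∂f/∂q_μ (q) + f q / 2)`. -/
noncomputable def Xop {d : ℕ} (a : Fin d → ℝ) (μ : Fin d)
    (f : EuclideanSpace ℝ (Fin d) → ℂ) : EuclideanSpace ℝ (Fin d) → ℂ :=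
  fun q => -Complex.I * (a μ : ℂ) *
    ((q μ : ℂ) * fderiv ℝ f q (EuclideanSpace.single μ 1) + f q / 2)

open LineDeriv SchwartzMap

variable {d : ℕ}

theorem EuclideanSpace.hasTemperateGrowth_apply (μ : Fin d) :
    (fun q : EuclideanSpace ℝ (Fin d) => q μ).HasTemperateGrowth :=
  (EuclideanSpace.proj μ : EuclideanSpace ℝ (Fin d) →L[ℝ] ℝ).hasTemperateGrowth

noncomputable def SchwartzMap.xop (a : Fin d → ℝ) (μ : Fin d)
    (f : 𝓢(EuclideanSpace ℝ (Fin d), ℂ)) : 𝓢(EuclideanSpace ℝ (Fin d), ℂ) :=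
  (-Complex.I * a μ) •
    (smulLeftCLM ℂ (fun q : EuclideanSpace ℝ (Fin d) => q μ)
        (∂_{EuclideanSpace.single μ (1 : ℝ)} f) + (2⁻¹ : ℂ) • f)

theorem SchwartzMap.coe_xop (a : Fin d → ℝ) (μ : Fin d) (f : 𝓢(EuclideanSpace ℝ (Fin d), ℂ)) :
    ⇑(f.xop a μ) = Xop a μ f := by
  ext q
  simp only [xop, Xop, add_apply, smul_apply, smulLeftCLM_apply_apply
    (EuclideanSpace.hasTemperateGrowth_apply μ), lineDerivOp_apply_eq_fderiv, Complex.real_smul,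
    smul_eq_mul]
  ring

theorem fderiv_Xop_apply_single_of_ne {f : EuclideanSpace ℝ (Fin d) → ℂ} (hf : ContDiff ℝ 2 f)
    (a : Fin d → ℝ) {μ ν : Fin d} (hμν : μ ≠ ν) (q : EuclideanSpace ℝ (Fin d)) :
    fderiv ℝ (Xop a ν f) q (EuclideanSpace.single μ 1) = -Complex.I * (a ν : ℂ) *
      ((q ν : ℂ) * fderiv ℝ (fderiv ℝ f) q (EuclideanSpace.single μ 1) (EuclideanSpace.single ν 1)
        + fderiv ℝ f q (EuclideanSpace.single μ 1) / 2) := by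
  have hf' : HasFDerivAt f (fderiv ℝ f q) q := (hf.differentiable (by norm_num) q).hasFDerivAt
  have hDf : HasFDerivAt (fderiv ℝ f) (fderiv ℝ (fderiv ℝ f) q) q :=
    ((hf.fderiv_right (m := 1) (by norm_num)).differentiable (by norm_num) q).hasFDerivAt
  have hcoord : HasFDerivAt (fun q : EuclideanSpace ℝ (Fin d) => (q ν : ℂ))
      (Complex.ofRealCLM.comp (EuclideanSpace.proj ν)) q :=
    (Complex.ofRealCLM.comp (EuclideanSpace.proj ν)).hasFDerivAt
  have hX := (((hcoord.mul (hDf.clm_apply (hasFDerivAt_const (EuclideanSpace.single ν 1) q))).add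
    (hf'.mul_const 2⁻¹)).const_mul (-Complex.I * (a ν : ℂ))).congr_of_eventuallyEq
      (f₁ := Xop a ν f) (.of_forall fun y => by simp [Xop, div_eq_mul_inv])
  rw [hX.fderiv]
  simp only [ContinuousLinearMap.comp_zero, zero_add, add_apply, smul_apply,
    ContinuousLinearMap.flip_apply, smul_eq_mul, ContinuousLinearMap.comp_apply, PiLp.proj_apply,
    PiLp.single_eq_of_ne' (p := 2) hμν, Complex.ofRealCLM_apply, Complex.ofReal_zero, mul_zero, add_zero]
  ring

theorem Xop_comm {f : EuclideanSpace ℝ (Fin d) → ℂ} (hf : ContDiff ℝ 2 f) (a : Fin d → ℝ)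
    (μ ν : Fin d) : Xop a μ (Xop a ν f) = Xop a ν (Xop a μ f) := by
  rcases eq_or_ne μ ν with rfl | hμν
  · rfl
  ext q
  have hsymm := (hf.contDiffAt (x := q)).isSymmSndFDerivAt (by simp)
    (EuclideanSpace.single μ 1) (EuclideanSpace.single ν 1)
  simp only [Xop, fderiv_Xop_apply_single_of_ne hf a hμν,
    fderiv_Xop_apply_single_of_ne hf a hμν.symm, hsymm]
  ring

theorem Xop_maps_schwartz_and_commutes_general
    {d : ℕ} (a : Fin d → ℝ) :
    (∀ (μ : Fin d) (f : SchwartzMap (EuclideanSpace ℝ (Fin d)) ℂ),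
      ∃ g : SchwartzMap (EuclideanSpace ℝ (Fin d)) ℂ, ⇑g = Xop a μ ⇑f) ∧
    (∀ (μ ν : Fin d) (f : SchwartzMap (EuclideanSpace ℝ (Fin d)) ℂ),
      Xop a μ (Xop a ν ⇑f) = Xop a ν (Xop a μ ⇑f)) :=
  ⟨fun μ f => ⟨f.xop a μ, f.coe_xop a μ⟩, fun μ ν f => Xop_comm (f.smooth 2) a μ ν⟩

theorem Xop_maps_schwartz_and_commutes
    {d : ℕ} (hd : 1 ≤ d) (a : Fin d → ℝ) :
    (∀ (μ : Fin d) (f : SchwartzMap (EuclideanSpace ℝ (Fin d)) ℂ),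
      ∃ g : SchwartzMap (EuclideanSpace ℝ (Fin d)) ℂ, ⇑g = Xop a μ ⇑f) ∧
    (∀ (μ ν : Fin d) (f : SchwartzMap (EuclideanSpace ℝ (Fin d)) ℂ),
      Xop a μ (Xop a ν ⇑f) = Xop a ν (Xop a μ ⇑f)) :=
  Xop_maps_schwartz_and_commutes_general a
end

section
/- Let A be a complex unital Banach algebra, let x, y ∈ A, and let μ ∈ ℂ be such that ⁅x, y⁆ = μ • y. Then for every natural number k, exp(x) * y^k * exp(−x) = exp(k*μ) • y^k. -/
/-!
The relation `⁅x, y⁆ = μ • y` says that `y` intertwines `x + μ` with `x`; multiplying, `y ^ k`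
intertwines `x + k * μ` with `x`, hence also their exponentials. Since `k * μ` is central,
`exp (x + k * μ) = exp (k * μ) • exp x`, and cancelling `exp x * exp (-x) = 1` gives the claim.
-/

open NormedSpace

theorem semiconjBy_add_algebraMap_of_lie_eq_smul {S R : Type*} [CommRing S] [Ring R]
    [Algebra S R] {x y : R} {μ : S} (h : ⁅x, y⁆ = μ • y) :
    SemiconjBy y (x + algebraMap S R μ) x := by
  rw [SemiconjBy, mul_add, ← Algebra.commutes, ← Algebra.smul_def, ← h, Ring.lie_def]
  abel

theorem SemiconjBy.pow_add_algebraMap {S R : Type*} [CommSemiring S] [Semiring R]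
    [Algebra S R] {x y : R} {c : S} (h : SemiconjBy y (x + algebraMap S R c) x) (k : ℕ) :
    SemiconjBy (y ^ k) (x + algebraMap S R (k * c)) x := by
  induction k with
  | zero => simp
  | succ k ih =>
    have shift :
        SemiconjBy y (x + algebraMap S R ((k + 1) * c)) (x + algebraMap S R (k * c)) := by
      simpa [add_mul, add_assoc, add_comm] using h.add_right (Algebra.commutes (k * c) y).symm
    simpa [pow_succ] using ih.mul_left shift

theorem exp_add_algebraMap {A : Type*} [NormedRing A] [NormedAlgebra ℂ A] [CompleteSpace A]
    (x : A) (c : ℂ) : exp (x + algebraMap ℂ A c) = Complex.exp c • exp x := by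
  -- `exp` does not depend on this choice; the exponential lemmas are stated over `ℚ`.
  let : NormedAlgebra ℚ A := NormedAlgebra.restrictScalars ℚ ℂ A
  rw [exp_add_of_commute (Algebra.commutes c x).symm, ← algebraMap_exp_comm, ← Algebra.commutes,
    ← Algebra.smul_def, Complex.exp_eq_exp_ℂ]

open NormedSpace in
theorem conj_exp_pow_of_commutator_smul
    {A : Type*} [NormedRing A] [NormedAlgebra ℂ A] [CompleteSpace A]
    (x y : A) (μ : ℂ) (h : ⁅x, y⁆ = μ • y) :
    ∀ k : ℕ, exp x * y ^ k * exp (-x) = Complex.exp (k * μ) • y ^ k := by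
  intro k
  let : NormedAlgebra ℚ A := NormedAlgebra.restrictScalars ℚ ℂ A
  have hk := ((semiconjBy_add_algebraMap_of_lie_eq_smul h).pow_add_algebraMap k).exp_right
  rw [← hk.eq, exp_add_algebraMap, mul_smul_comm, smul_mul_assoc, mul_assoc,
    ← exp_add_of_commute (Commute.refl x).neg_right, add_neg_cancel, exp_zero, mul_one]
end

section
/- Let A be a complex unital Banach algebra, let x0, x1 ∈ A, and let Ω, Θ, a₀ be real numbers with a₀ ≠ 0 and Θ ≠ 0, such that ⁅x0, x1⁆ = (i*Ω) • 1. Then the centrality condition ⁅x0, exp((−2*a₀*Θ) • x1)⁆ = (−2*i*a₀) • exp((−2*a₀*Θ) • x1) holds if and only if Ω * Θ = 1. -/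
/-!
A commutator with `a` is a derivation, so when `⁅a, b⁆` commutes with `b` it acts on the
exponential series of `b` as `d/db`, giving `⁅a, exp b⁆ = ⁅a, b⁆ * exp b`. For `b = c • x1` with
`c = -2a₀Θ` this turns the centrality condition into `(c * iΩ) • exp b = (-2ia₀) • exp b`; as
`exp b` is a unit, this is the scalar equation `-2a₀Θ · iΩ = -2ia₀`, i.e. `ΩΘ = 1`.
-/

open NormedSpace
open scoped Nat

theorem Ring.lie_smul_right {R A : Type*} [CommSemiring R] [Ring A] [Algebra R A] (t : R)
    (a b : A) : ⁅a, t • b⁆ = t • ⁅a, b⁆ := by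
  simp only [Ring.lie_def, mul_smul_comm, smul_mul_assoc, smul_sub]

theorem Commute.lie_pow_succ {R : Type*} [Ring R] {a b : R} (h : Commute ⁅a, b⁆ b) (n : ℕ) :
    ⁅a, b ^ (n + 1)⁆ = (n + 1) • (⁅a, b⁆ * b ^ n) := by
  induction n with
  | zero => simp
  | succ n ih =>
    have leibniz : ⁅a, b ^ (n + 1) * b⁆ = ⁅a, b ^ (n + 1)⁆ * b + b ^ (n + 1) * ⁅a, b⁆ := by
      simp only [Ring.lie_def]; noncomm_ring
    rw [pow_succ _ (n + 1), leibniz, ih, ← (h.pow_right (n + 1)).eq, smul_mul_assoc, mul_assoc,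
      ← pow_succ, succ_nsmul _ (n + 1)]

theorem lie_exp_of_commute_lie (𝕂 : Type*) {𝔸 : Type*} [NontriviallyNormedField 𝕂] [CharZero 𝕂]
    [ContinuousSMul ℚ 𝕂] [NormedRing 𝔸] [NormedAlgebra 𝕂 𝔸] [CompleteSpace 𝔸] {a b : 𝔸}
    (h : Commute ⁅a, b⁆ b) : ⁅a, exp b⁆ = ⁅a, b⁆ * exp b := by
  have hexp := exp_series_hasSum_exp' (𝕂 := 𝕂) b
  have hlie : HasSum (fun n ↦ ⁅a, (n ! : 𝕂)⁻¹ • b ^ n⁆) ⁅a, exp b⁆ := by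
    simpa only [Ring.lie_def] using (hexp.mul_left a).sub (hexp.mul_right a)
  have hterm (n : ℕ) :
      ⁅a, ((n + 1)! : 𝕂)⁻¹ • b ^ (n + 1)⁆ = ⁅a, b⁆ * ((n ! : 𝕂)⁻¹ • b ^ n) := by
    have hfact : ((n + 1)! : 𝕂)⁻¹ * (n + 1) = (n ! : 𝕂)⁻¹ := by
      rw [Nat.factorial_succ, Nat.cast_mul, Nat.cast_add_one]
      field_simp
    rw [Ring.lie_smul_right, h.lie_pow_succ, ← Nat.cast_smul_eq_nsmul 𝕂, smul_smul, Nat.cast_add_one,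
      hfact, mul_smul_comm]
  have hzero : ⁅a, (0 ! : 𝕂)⁻¹ • b ^ 0⁆ = 0 := by simp [Ring.lie_def]
  rw [← hasSum_nat_add_iff' 1, Finset.sum_range_one, hzero, sub_zero] at hlie
  simp only [hterm] at hlie
  exact hlie.unique (hexp.mul_left _)

theorem centrality_iff_MoyalWeyl_general
    {A : Type*} [NormedRing A] [NormOneClass A] [NormedAlgebra ℂ A] [CompleteSpace A]
    (x0 x1 : A) (Ω Θ a₀ : ℝ) (ha : a₀ ≠ 0)
    (h : ⁅x0, x1⁆ = (Complex.I * (Ω : ℂ)) • (1 : A)) :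
    ⁅x0, exp ((((-2 * a₀ * Θ : ℝ) : ℂ)) • x1)⁆ =
        ((-2 : ℂ) * Complex.I * (a₀ : ℂ)) • exp ((((-2 * a₀ * Θ : ℝ) : ℂ)) • x1)
      ↔ Ω * Θ = 1 := by
  set c : ℂ := ((-2 * a₀ * Θ : ℝ) : ℂ) with hc
  have hlie : ⁅x0, c • x1⁆ = (c * (Complex.I * Ω)) • (1 : A) := by
    rw [Ring.lie_smul_right, h, smul_smul]
  have := NormOneClass.nontrivial (G := A)
  have hexp : exp (c • x1) ≠ 0 :=
    (isUnit_exp_of_mem_ball (𝕂 := ℂ)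
      ((expSeries_radius_eq_top ℂ A).symm ▸ edist_lt_top _ _)).ne_zero
  have hcentral : Commute ⁅x0, c • x1⁆ (c • x1) := hlie ▸ (Commute.one_left _).smul_left _
  rw [lie_exp_of_commute_lie ℂ hcentral, hlie, smul_one_mul, (smul_left_injective ℂ hexp).eq_iff]
  have h2ia : (-2 * Complex.I * a₀ : ℂ) ≠ 0 := by simp [Complex.I_ne_zero, ha]
  calc c * (Complex.I * Ω) = -2 * Complex.I * a₀
      ↔ (-2 * Complex.I * a₀) * ((Ω * Θ : ℝ) : ℂ) = (-2 * Complex.I * a₀) * 1 := by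
        rw [hc]; push_cast; constructor <;> intro h' <;> linear_combination h'
    _ ↔ Ω * Θ = 1 := by rw [mul_right_inj' h2ia]; exact_mod_cast Iff.rfl

open NormedSpace in
theorem centrality_iff_MoyalWeyl
    {A : Type*} [NormedRing A] [NormOneClass A] [NormedAlgebra ℂ A] [CompleteSpace A]
    (x0 x1 : A) (Ω Θ a₀ : ℝ) (ha : a₀ ≠ 0) (hΘ : Θ ≠ 0)
    (h : ⁅x0, x1⁆ = (Complex.I * (Ω : ℂ)) • (1 : A)) :
    ⁅x0, exp ((((-2 * a₀ * Θ : ℝ) : ℂ)) • x1)⁆ =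
        ((-2 : ℂ) * Complex.I * (a₀ : ℂ)) • exp ((((-2 * a₀ * Θ : ℝ) : ℂ)) • x1)
      ↔ Ω * Θ = 1 :=
  centrality_iff_MoyalWeyl_general x0 x1 Ω Θ a₀ ha h
end

section
/- Let Θ ∈ ℝ, let a : ℝ → ℝ be twice differentiable with a(t) ≠ 0 for all t, and let ρ : ℝ → ℝ be differentiable. Assume the deformed Friedmann equations hold for all t: 3*(a'(t))² = 8*π*ρ(t)*(a(t))² and 3*a''(t)*a(t) = −4*π*ρ(t)*(a(t))² + (3/2)*Θ². Then for all t, the derivative of the function s ↦ ρ(s)*(a(s))³ at t equals (3/(8*π))*Θ²*a'(t). -/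
/-!
The first Friedmann equation expresses the comoving mass as `ρ a³ = (3 / 8π) a a'²`, so
`(ρ a³)' = (3 / 8π) a' (a'² + 2 a a'')`, and eliminating `ρ` between the two Friedmann equations
gives `a'² + 2 a a'' = Θ²`.
-/

open Real

lemma mul_cube_eq_of_friedmann {x y r : ℝ} (h : 3 * x ^ 2 = 8 * π * r * y ^ 2) :
    r * y ^ 3 = 3 / (8 * π) * (y * x ^ 2) := by
  rw [div_mul_eq_mul_div, eq_div_iff (by positivity)]
  linear_combination (-y) * h

lemma sq_add_two_mul_mul_eq_of_friedmann {Θ x y z r : ℝ}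
    (h₁ : 3 * x ^ 2 = 8 * π * r * y ^ 2)
    (h₂ : 3 * z * y = -4 * π * r * y ^ 2 + 3 / 2 * Θ ^ 2) :
    x ^ 2 + 2 * y * z = Θ ^ 2 := by
  linear_combination (h₁ + 2 * h₂) / 3

lemma hasDerivAt_mul_deriv_sq {a : ℝ → ℝ} {t : ℝ} (ha : DifferentiableAt ℝ a t)
    (ha' : DifferentiableAt ℝ (deriv a) t) :
    HasDerivAt (fun s => a s * deriv a s ^ 2)
      (deriv a t * (deriv a t ^ 2 + 2 * a t * deriv (deriv a) t)) t :=
  (ha.hasDerivAt.fun_mul (ha'.hasDerivAt.fun_pow 2)).congr_deriv (by push_cast; ring)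

theorem deformed_FRW_continuity_deriv_general
    (Θ : ℝ) (a ρ : ℝ → ℝ)
    (ha : Differentiable ℝ a) (ha' : Differentiable ℝ (deriv a))
    (heq1 : ∀ t, 3 * (deriv a t) ^ 2 = 8 * π * ρ t * (a t) ^ 2)
    (heq2 : ∀ t, 3 * deriv (deriv a) t * a t = -4 * π * ρ t * (a t) ^ 2 + (3 / 2) * Θ ^ 2) :
    ∀ t, deriv (fun s => ρ s * (a s) ^ 3) t = (3 / (8 * π)) * Θ ^ 2 * deriv a t := by
  intro t
  have hmass : (fun s => ρ s * a s ^ 3) = fun s => 3 / (8 * π) * (a s * deriv a s ^ 2) :=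
    funext fun s => mul_cube_eq_of_friedmann (heq1 s)
  rw [hmass, ((hasDerivAt_mul_deriv_sq (ha t) (ha' t)).const_mul _).deriv,
    sq_add_two_mul_mul_eq_of_friedmann (heq1 t) (heq2 t)]
  ring

theorem deformed_FRW_continuity_deriv
    (Θ : ℝ) (a ρ : ℝ → ℝ)
    (ha : Differentiable ℝ a) (ha' : Differentiable ℝ (deriv a))
    (hρ : Differentiable ℝ ρ)
    (hane : ∀ t, a t ≠ 0)
    (heq1 : ∀ t, 3 * (deriv a t) ^ 2 = 8 * π * ρ t * (a t) ^ 2)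
    (heq2 : ∀ t, 3 * deriv (deriv a) t * a t = -4 * π * ρ t * (a t) ^ 2 + (3 / 2) * Θ ^ 2) :
    ∀ t, deriv (fun s => ρ s * (a s) ^ 3) t = (3 / (8 * π)) * Θ ^ 2 * deriv a t :=
  deformed_FRW_continuity_deriv_general Θ a ρ ha ha' heq1 heq2
end

section
/- Let Θ ∈ ℝ, let a : ℝ → ℝ be twice differentiable with a(t) ≠ 0 for all t, and let ρ : ℝ → ℝ be differentiable. Assume the deformed Friedmann equations hold for all t: 3*(a'(t))² = 8*π*ρ(t)*(a(t))² and 3*a''(t)*a(t) = −4*π*ρ(t)*(a(t))² + (3/2)*Θ². Then there exists a constant C' ∈ ℝ such that for all t, ρ(t)*(a(t))³ = (3/(8*π))*Θ²*a(t) + C'. -/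
open Real

theorem deformed_FRW_integrated_continuity
    (Θ : ℝ) (a ρ : ℝ → ℝ)
    (ha : Differentiable ℝ a) (ha' : Differentiable ℝ (deriv a))
    (hρ : Differentiable ℝ ρ)
    (hane : ∀ t, a t ≠ 0)
    (heq1 : ∀ t, 3 * (deriv a t) ^ 2 = 8 * π * ρ t * (a t) ^ 2)
    (heq2 : ∀ t, 3 * deriv (deriv a) t * a t = -4 * π * ρ t * (a t) ^ 2 + (3 / 2) * Θ ^ 2) :
    ∃ C' : ℝ, ∀ t, ρ t * (a t) ^ 3 = (3 / (8 * π)) * Θ ^ 2 * a t + C' := by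
  set F : ℝ → ℝ := fun t => (deriv a t) ^ 2 * a t - Θ ^ 2 * a t with hF
  have hFdiff : Differentiable ℝ F := (((ha'.pow 2).mul ha).sub (ha.const_mul _))
  have hderiv0 : ∀ t, deriv F t = 0 := by
    intro t
    have h1 : HasDerivAt a (deriv a t) t := (ha t).hasDerivAt
    have h2 : HasDerivAt (deriv a) (deriv (deriv a) t) t := (ha' t).hasDerivAt
    have h3 : HasDerivAt F
        ((2 * (deriv a t) ^ 1 * deriv (deriv a) t) * a t + (deriv a t) ^ 2 * deriv a t
          - Θ ^ 2 * deriv a t) t := ((h2.pow 2).mul h1).sub (h1.const_mul _)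
    rw [h3.deriv]
    linear_combination (2 / 3 * deriv a t) * heq2 t + (1 / 3 * deriv a t) * heq1 t
  have hconst := is_const_of_deriv_eq_zero hFdiff hderiv0
  refine ⟨3 / (8 * π) * F 0, fun t => ?_⟩
  have hFt : (deriv a t) ^ 2 * a t - Θ ^ 2 * a t = F 0 := hconst t 0
  have hπ : (8 : ℝ) * π ≠ 0 := by positivity
  simp only [hF] at hFt
  field_simp
  linear_combination 3 * hFt - a t * heq1 t
end

section
/- Let Θ, C' ∈ ℝ, let a : ℝ → ℝ be differentiable with a(t) ≠ 0 for all t, and let ρ : ℝ → ℝ satisfy for all t: 3*(a'(t))² = 8*π*ρ(t)*(a(t))² and ρ(t)*(a(t))³ = (3/(8*π))*Θ²*a(t) + C'. Then for all t, (a'(t))² = Θ² + ((8*π/3)*C')/a(t); that is, the scale factor obeys the Friedmann equation of a dust-filled Friedmann–Robertson–Walker universe in which the deformation parameter Θ² plays the role of (minus) the spatial curvature index k. -/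
open Real

theorem deformed_FRW_friedmann_equation
    (Θ C' : ℝ) (a ρ : ℝ → ℝ)
    (ha : Differentiable ℝ a)
    (hane : ∀ t, a t ≠ 0)
    (heq1 : ∀ t, 3 * (deriv a t) ^ 2 = 8 * π * ρ t * (a t) ^ 2)
    (heq2 : ∀ t, ρ t * (a t) ^ 3 = (3 / (8 * π)) * Θ ^ 2 * a t + C') :
    ∀ t, (deriv a t) ^ 2 = Θ ^ 2 + ((8 * π / 3) * C') / a t := by
  intro t
  have h1 := heq1 t
  have h2 := heq2 t
  have hπ := Real.pi_ne_zero
  have hab := hane t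
  field_simp at h2 ⊢
  linear_combination a t * h1 + h2
end
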